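/- If a solution σ on generalized highway problems with a coalitional structure satisfies Pareto optimality, equal treatment of unions, and coalitional independence of outside changes, then the total payment of each union a equals the Shapley value of that union in the quotient game: Σ_{i∈P_a} σ_i(Γ,P) = Σ_{t∈T(P_a)} C(t)/|{b : t ∈ T(P_b)}|. -/

import Mathlib

open Finset

/-- A generalized highway problem with a coalitional structure: agents drawn
from `𝒩`, sections from `𝒦`, union labels from `ℳ`.  `N` is the (finite) agent
set, `K` the section set, `C` the section costs, `T i` the sections used by
agent `i`, `M` the set of (nonempty) a priori unions and `u i` the union label
of agent `i`. -/
structure GHP (𝒩 𝒦 ℳ : Type*) where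
  N : Finset 𝒩
  K : Finset 𝒦
  C : 𝒦 → ℝ
  T : 𝒩 → Finset 𝒦
  M : Finset ℳ
  u : 𝒩 → Option ℳ

namespace GHP

variable {𝒩 𝒦 ℳ : Type*} [DecidableEq 𝒩] [DecidableEq 𝒦] [DecidableEq ℳ]

/-- The members of the a priori union labelled `a`. -/
def part (Γ : GHP 𝒩 𝒦 ℳ) (a : ℳ) : Finset 𝒩 :=
  Γ.N.filter (fun i => Γ.u i = some a)

/-- Validity of a generalized highway problem with a coalitional structure. -/
def Valid (Γ : GHP 𝒩 𝒦 ℳ) : Prop :=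
  (∀ i ∈ Γ.N, (Γ.T i).Nonempty ∧ Γ.T i ⊆ Γ.K) ∧
  (∀ i, i ∉ Γ.N → Γ.T i = ∅) ∧
  (∀ t ∈ Γ.K, ∃ i ∈ Γ.N, t ∈ Γ.T i) ∧
  (∀ t, 0 ≤ Γ.C t) ∧ (∀ t, t ∉ Γ.K → Γ.C t = 0) ∧
  (∀ i ∈ Γ.N, ∃ a ∈ Γ.M, Γ.u i = some a) ∧
  (∀ i, i ∉ Γ.N → Γ.u i = none) ∧
  (∀ a ∈ Γ.M, (Γ.part a).Nonempty)

/-- Restriction of a problem (and its partition) to a set of sections `K'`. -/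
def restrict (Γ : GHP 𝒩 𝒦 ℳ) (K' : Finset 𝒦) : GHP 𝒩 𝒦 ℳ where
  N := Γ.N.filter (fun i => (Γ.T i ∩ K').Nonempty)
  K := K'
  C := fun t => if t ∈ K' then Γ.C t else 0
  T := fun i => if (Γ.T i ∩ K').Nonempty then Γ.T i ∩ K' else ∅
  M := Γ.M.filter (fun a =>
    ((Γ.N.filter (fun i => (Γ.T i ∩ K').Nonempty)).filter
      (fun i => Γ.u i = some a)).Nonempty)
  u := fun i => if i ∈ Γ.N.filter (fun i => (Γ.T i ∩ K').Nonempty) then Γ.u i else none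

/-- The sections used by union `a`. -/
def unionSections (Γ : GHP 𝒩 𝒦 ℳ) (a : ℳ) : Finset 𝒦 := (Γ.part a).biUnion Γ.T

/-- The set of unions using section `t`. -/
def usingUnions (Γ : GHP 𝒩 𝒦 ℳ) (t : 𝒦) : Finset ℳ :=
  Γ.M.filter (fun a => t ∈ Γ.unionSections a)

/-- The set of agents using section `t`. -/
def usingAgents (Γ : GHP 𝒩 𝒦 ℳ) (t : 𝒦) : Finset 𝒩 :=
  Γ.N.filter (fun i => t ∈ Γ.T i)

/-- The members of `i`'s own union that use section `t`. -/
def usingMates (Γ : GHP 𝒩 𝒦 ℳ) (i : 𝒩) (t : 𝒦) : Finset 𝒩 :=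
  (Γ.N.filter (fun j => Γ.u j = Γ.u i)).filter (fun j => t ∈ Γ.T j)

/-- The Owen value of a generalized highway problem with a coalitional
structure, in its explicit form `Ψ_i = Σ_{t∈T(i)} C(t)/(|𝒜_t|·|N_t^a|)`. -/
noncomputable def owen (Γ : GHP 𝒩 𝒦 ℳ) (i : 𝒩) : ℝ :=
  ∑ t ∈ Γ.T i, Γ.C t / (((Γ.usingUnions t).card : ℝ) * ((Γ.usingMates i t).card : ℝ))

end GHP

open GHP

/-!
Induction on the number of sections. A union `b` whose sections `T(P_b)` form a proper subset of
`K` gets, by (CIOC), the same total as in the restriction of the problem to `T(P_b)`, which has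
fewer sections and in which the quotient Shapley value of `b` is unchanged. The remaining unions
all use every section, so by (ETPU) they receive equal totals, and their quotient Shapley values
are equal as well. Both the totals (by (PO)) and the quotient Shapley values sum to `Σ_{t∈K} C(t)`,
so the two agree on these unions too.
-/

theorem Finset.eq_of_sum_eq_of_eq_off_class {ι M : Type*} [AddCancelCommMonoid M]
    [IsAddTorsionFree M] {s : Finset ι} {x y : ι → M} (p : ι → Prop) [DecidablePred p]
    (hsum : ∑ b ∈ s, x b = ∑ b ∈ s, y b) (hoff : ∀ b ∈ s, ¬ p b → x b = y b)
    {a : ι} (ha : a ∈ s) (hpa : p a)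
    (hx : ∀ b ∈ s, p b → x b = x a) (hy : ∀ b ∈ s, p b → y b = y a) : x a = y a := by
  have hclass : ∀ z : ι → M, (∀ b ∈ s, p b → z b = z a) →
      ∑ b ∈ s.filter p, z b = #(s.filter p) • z a := fun z hz => by
    rw [← sum_const]
    exact sum_congr rfl fun b hb => hz b (mem_filter.1 hb).1 (mem_filter.1 hb).2
  have hne : #(s.filter p) ≠ 0 := card_ne_zero_of_mem (mem_filter.2 ⟨ha, hpa⟩)
  rw [← sum_filter_add_sum_filter_not s p, ← sum_filter_add_sum_filter_not s p,
    sum_congr rfl fun b hb => hoff b (mem_filter.1 hb).1 (mem_filter.1 hb).2,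
    hclass x hx, hclass y hy] at hsum
  exact nsmul_right_injective hne (add_right_cancel hsum)

namespace GHP

attribute [ext] GHP

variable {𝒩 𝒦 ℳ : Type*} [DecidableEq ℳ]

theorem mem_part {Γ : GHP 𝒩 𝒦 ℳ} {a : ℳ} {i : 𝒩} :
    i ∈ Γ.part a ↔ i ∈ Γ.N ∧ Γ.u i = some a :=
  mem_filter

theorem Valid.sum_sum_part [DecidableEq 𝒩] {Γ : GHP 𝒩 𝒦 ℳ} (hV : Γ.Valid) (f : 𝒩 → ℝ) :
    ∑ b ∈ Γ.M, ∑ i ∈ Γ.part b, f i = ∑ i ∈ Γ.N, f i := by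
  rw [← sum_biUnion]
  · refine sum_congr (ext fun i => ?_) fun _ _ => rfl
    simp only [mem_biUnion, mem_part]
    refine ⟨fun ⟨_, _, hi, _⟩ => hi, fun hi => ?_⟩
    obtain ⟨b, hb, hu⟩ := hV.2.2.2.2.2.1 i hi
    exact ⟨b, hb, hi, hu⟩
  · intro b _ c _ hbc
    simp only [Function.onFun, disjoint_left, mem_part]
    rintro i ⟨_, hib⟩ ⟨_, hic⟩
    exact hbc (Option.some.inj (hib.symm.trans hic))

variable [DecidableEq 𝒦]

theorem mem_unionSections {Γ : GHP 𝒩 𝒦 ℳ} {a : ℳ} {t : 𝒦} :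
    t ∈ Γ.unionSections a ↔ ∃ i ∈ Γ.part a, t ∈ Γ.T i :=
  mem_biUnion

theorem mem_usingUnions {Γ : GHP 𝒩 𝒦 ℳ} {t : 𝒦} {b : ℳ} :
    b ∈ Γ.usingUnions t ↔ b ∈ Γ.M ∧ t ∈ Γ.unionSections b :=
  mem_filter

/-- The Shapley value of union `a` in the quotient game. -/
noncomputable def quotientShapley (Γ : GHP 𝒩 𝒦 ℳ) (a : ℳ) : ℝ :=
  ∑ t ∈ Γ.unionSections a, Γ.C t / (#(Γ.usingUnions t) : ℝ)

section Valid

variable {Γ : GHP 𝒩 𝒦 ℳ} (hV : Γ.Valid)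
include hV

theorem Valid.unionSections_subset (a : ℳ) : Γ.unionSections a ⊆ Γ.K :=
  biUnion_subset.2 fun i hi => (hV.1 i (mem_part.1 hi).1).2

theorem Valid.usingUnions_nonempty {t : 𝒦} (ht : t ∈ Γ.K) : (Γ.usingUnions t).Nonempty := by
  obtain ⟨i, hiN, hti⟩ := hV.2.2.1 t ht
  obtain ⟨b, hb, hu⟩ := hV.2.2.2.2.2.1 i hiN
  exact ⟨b, mem_usingUnions.2 ⟨hb, mem_unionSections.2 ⟨i, mem_part.2 ⟨hiN, hu⟩, hti⟩⟩⟩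

theorem Valid.sum_quotientShapley :
    ∑ b ∈ Γ.M, Γ.quotientShapley b = ∑ t ∈ Γ.K, Γ.C t := by
  unfold quotientShapley
  rw [sum_comm' (t' := Γ.K) (s' := Γ.usingUnions) fun b t =>
    ⟨fun ⟨hb, ht⟩ => ⟨mem_usingUnions.2 ⟨hb, ht⟩, hV.unionSections_subset b ht⟩,
     fun ⟨hb, _⟩ => mem_usingUnions.1 hb⟩]
  refine sum_congr rfl fun t ht => ?_
  rw [sum_const, nsmul_eq_mul]
  exact mul_div_cancel₀ _ (Nat.cast_ne_zero.2 (hV.usingUnions_nonempty ht).card_ne_zero)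

end Valid

variable [DecidableEq 𝒩]

section Restrict

variable (Γ : GHP 𝒩 𝒦 ℳ) (K' : Finset 𝒦)

theorem mem_restrict_N {i : 𝒩} : i ∈ (Γ.restrict K').N ↔ i ∈ Γ.N ∧ (Γ.T i ∩ K').Nonempty :=
  mem_filter

theorem restrict_T_of_nonempty {i : 𝒩} (h : (Γ.T i ∩ K').Nonempty) :
    (Γ.restrict K').T i = Γ.T i ∩ K' := if_pos h

theorem restrict_T_of_not_nonempty {i : 𝒩} (h : ¬ (Γ.T i ∩ K').Nonempty) :
    (Γ.restrict K').T i = ∅ := if_neg h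

theorem restrict_u_of_mem {i : 𝒩} (h : i ∈ (Γ.restrict K').N) : (Γ.restrict K').u i = Γ.u i :=
  if_pos h

theorem restrict_u_of_not_mem {i : 𝒩} (h : i ∉ (Γ.restrict K').N) : (Γ.restrict K').u i = none :=
  if_neg h

theorem restrict_T_subset (i : 𝒩) : (Γ.restrict K').T i ⊆ K' := by
  by_cases h : (Γ.T i ∩ K').Nonempty
  · exact restrict_T_of_nonempty Γ K' h ▸ inter_subset_right
  · exact restrict_T_of_not_nonempty Γ K' h ▸ empty_subset _

theorem part_restrict (b : ℳ) :
    (Γ.restrict K').part b = {i ∈ Γ.part b | (Γ.T i ∩ K').Nonempty} := by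
  ext i
  simp only [part, restrict, mem_filter]
  grind

theorem mem_restrict_M {b : ℳ} :
    b ∈ (Γ.restrict K').M ↔ b ∈ Γ.M ∧ ((Γ.restrict K').part b).Nonempty := by
  rw [part_restrict]
  simp only [restrict, part, mem_filter, filter_filter, and_comm]

theorem unionSections_restrict (b : ℳ) :
    (Γ.restrict K').unionSections b = Γ.unionSections b ∩ K' := by
  ext t
  simp only [mem_unionSections, part_restrict, mem_filter, mem_inter]
  constructor
  · rintro ⟨i, ⟨hi, hne⟩, ht⟩
    rw [restrict_T_of_nonempty _ _ hne, mem_inter] at ht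
    exact ⟨⟨i, hi, ht.1⟩, ht.2⟩
  · rintro ⟨⟨i, hi, ht⟩, htK⟩
    have hne : (Γ.T i ∩ K').Nonempty := ⟨t, mem_inter.2 ⟨ht, htK⟩⟩
    exact ⟨i, ⟨hi, hne⟩, by rw [restrict_T_of_nonempty _ _ hne]; exact mem_inter.2 ⟨ht, htK⟩⟩

theorem usingUnions_restrict {t : 𝒦} (ht : t ∈ K') :
    (Γ.restrict K').usingUnions t = Γ.usingUnions t := by
  ext b
  simp only [mem_usingUnions, mem_restrict_M, unionSections_restrict, mem_inter, part_restrict,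
    and_iff_left ht, and_congr_left_iff, and_iff_left_iff_imp, mem_unionSections]
  rintro ⟨i, hi, hti⟩ -
  exact ⟨i, mem_filter.2 ⟨hi, t, mem_inter.2 ⟨hti, ht⟩⟩⟩

theorem restrict_restrict_self : (Γ.restrict K').restrict K' = Γ.restrict K' := by
  set Δ := Γ.restrict K'
  have hT : ∀ i, Δ.T i ∩ K' = Δ.T i := fun i => inter_eq_left.2 (restrict_T_subset Γ K' i)
  have hused : ∀ i ∈ Δ.N, (Δ.T i ∩ K').Nonempty := fun i hi => by
    rw [hT, restrict_T_of_nonempty _ _ ((mem_restrict_N Γ K').1 hi).2]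
    exact ((mem_restrict_N Γ K').1 hi).2
  have hN : (Δ.restrict K').N = Δ.N := filter_true_of_mem hused
  apply GHP.ext hN rfl
  · funext t
    by_cases ht : t ∈ K' <;> simp [Δ, restrict, ht]
  · funext i
    by_cases hne : (Δ.T i ∩ K').Nonempty
    · rw [restrict_T_of_nonempty _ _ hne, hT]
    · rw [restrict_T_of_not_nonempty _ _ hne, ← hT, not_nonempty_iff_eq_empty.1 hne]
  · ext b
    rw [mem_restrict_M, part_restrict,
      filter_true_of_mem fun i hi => hused i (mem_part.1 hi).1]
    exact and_iff_left_of_imp fun hb => ((mem_restrict_M Γ K').1 hb).2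
  · funext i
    by_cases hi : i ∈ Δ.N
    · exact restrict_u_of_mem Δ K' (hN.symm ▸ hi)
    · rw [restrict_u_of_not_mem Δ K' (hN.symm ▸ hi), restrict_u_of_not_mem Γ K' hi]

end Restrict

section Valid

variable {Γ : GHP 𝒩 𝒦 ℳ} (hV : Γ.Valid)
include hV

theorem Valid.restrict {K' : Finset 𝒦} (hK : K' ⊆ Γ.K) : (Γ.restrict K').Valid := by
  obtain ⟨-, hTout, hused, hC, -, hu, -, -⟩ := hV
  refine ⟨fun i hi => ?_, fun i hi => ?_, fun t ht => ?_, fun t => ?_, fun t ht => if_neg ht,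
    fun i hi => ?_, fun i hi => restrict_u_of_not_mem Γ K' hi,
    fun b hb => ((mem_restrict_M Γ K').1 hb).2⟩
  · have hne := ((mem_restrict_N Γ K').1 hi).2
    exact restrict_T_of_nonempty Γ K' hne ▸ ⟨hne, inter_subset_right⟩
  · by_cases hne : (Γ.T i ∩ K').Nonempty
    · have hiN : i ∈ Γ.N := by
        by_contra hiN
        simp [hTout i hiN] at hne
      exact absurd ((mem_restrict_N Γ K').2 ⟨hiN, hne⟩) hi
    · exact restrict_T_of_not_nonempty Γ K' hne
  · obtain ⟨i, hiN, hti⟩ := hused t (hK ht)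
    have hne : (Γ.T i ∩ K').Nonempty := ⟨t, mem_inter.2 ⟨hti, ht⟩⟩
    exact ⟨i, (mem_restrict_N Γ K').2 ⟨hiN, hne⟩,
      restrict_T_of_nonempty Γ K' hne ▸ mem_inter.2 ⟨hti, ht⟩⟩
  · by_cases ht : t ∈ K' <;> simp [GHP.restrict, ht, hC t]
  · obtain ⟨hiN, hne⟩ := (mem_restrict_N Γ K').1 hi
    obtain ⟨b, hb, hub⟩ := hu i hiN
    refine ⟨b, (mem_restrict_M Γ K').2 ⟨hb, i, ?_⟩, restrict_u_of_mem Γ K' hi ▸ hub⟩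
    rw [part_restrict]
    exact mem_filter.2 ⟨mem_part.2 ⟨hiN, hub⟩, hne⟩

theorem Valid.part_restrict_unionSections (a : ℳ) :
    (Γ.restrict (Γ.unionSections a)).part a = Γ.part a := by
  rw [part_restrict, filter_true_of_mem]
  intro i hi
  have hsub : Γ.T i ⊆ Γ.unionSections a := subset_biUnion_of_mem Γ.T hi
  rw [inter_eq_left.2 hsub]
  exact (hV.1 i (mem_part.1 hi).1).1

theorem Valid.mem_restrict_unionSections_M {a : ℳ} (ha : a ∈ Γ.M) :
    a ∈ (Γ.restrict (Γ.unionSections a)).M := by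
  rw [mem_restrict_M, hV.part_restrict_unionSections]
  exact ⟨ha, hV.2.2.2.2.2.2.2 a ha⟩

end Valid

theorem quotientShapley_restrict_unionSections (Γ : GHP 𝒩 𝒦 ℳ) (a : ℳ) :
    (Γ.restrict (Γ.unionSections a)).quotientShapley a = Γ.quotientShapley a := by
  unfold quotientShapley
  rw [unionSections_restrict, inter_self]
  refine sum_congr rfl fun t ht => ?_
  rw [usingUnions_restrict _ _ ht]
  exact congrArg (· / _) (if_pos ht)

end GHP

/-- if a solution satisfies (PO), (ETPU) and (CIOC), then the
total payment of each union `a` equals the Shapley value of that union in the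
quotient game, `Σ_{t∈T(P_a)} C(t)/|{b : t ∈ T(P_b)}|`. -/
theorem union_totals_are_quotient_shapley
    {𝒩 𝒦 ℳ : Type*} [DecidableEq 𝒩] [DecidableEq 𝒦] [DecidableEq ℳ]
    (σ : GHP 𝒩 𝒦 ℳ → 𝒩 → ℝ)
    -- (PO)
    (hPO : ∀ Γ : GHP 𝒩 𝒦 ℳ, Γ.Valid → ∑ i ∈ Γ.N, σ Γ i = ∑ t ∈ Γ.K, Γ.C t)
    -- (ETPU)
    (hETPU : ∀ Γ : GHP 𝒩 𝒦 ℳ, Γ.Valid → ∀ a ∈ Γ.M, ∀ b ∈ Γ.M,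
      Γ.unionSections a = Γ.unionSections b →
      ∑ i ∈ Γ.part a, σ Γ i = ∑ i ∈ Γ.part b, σ Γ i)
    -- (CIOC)
    (hCIOC : ∀ Γ Γ' : GHP 𝒩 𝒦 ℳ, Γ.Valid → Γ'.Valid → ∀ a, a ∈ Γ.M → a ∈ Γ'.M →
      Γ.restrict (Γ.unionSections a) = Γ'.restrict (Γ'.unionSections a) →
      ∑ i ∈ Γ.part a, σ Γ i = ∑ i ∈ Γ'.part a, σ Γ' i) :
    ∀ Γ : GHP 𝒩 𝒦 ℳ, Γ.Valid → ∀ a ∈ Γ.M,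
      ∑ i ∈ Γ.part a, σ Γ i
        = ∑ t ∈ Γ.unionSections a, Γ.C t / ((Γ.usingUnions t).card : ℝ) := by
  intro Γ
  induction hn : #Γ.K using Nat.strong_induction_on generalizing Γ with
  | _ n ih =>
  intro hV
  have hproper : ∀ b ∈ Γ.M, Γ.unionSections b ≠ Γ.K →
      ∑ i ∈ Γ.part b, σ Γ i = Γ.quotientShapley b := by
    intro b hb hne
    set Γ' := Γ.restrict (Γ.unionSections b)
    have hV' : Γ'.Valid := hV.restrict (hV.unionSections_subset b)
    have hb' : b ∈ Γ'.M := hV.mem_restrict_unionSections_M hb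
    have hlt : #Γ'.K < n := hn ▸ card_lt_card ((hV.unionSections_subset b).ssubset_of_ne hne)
    have hsame : Γ.restrict (Γ.unionSections b) = Γ'.restrict (Γ'.unionSections b) := by
      rw [unionSections_restrict, inter_self, restrict_restrict_self]
    rw [hCIOC Γ Γ' hV hV' b hb hb' hsame, ih _ hlt Γ' rfl hV' b hb']
    exact quotientShapley_restrict_unionSections Γ b
  intro a ha
  by_cases hKa : Γ.unionSections a = Γ.K
  · refine eq_of_sum_eq_of_eq_off_class (x := fun b => ∑ i ∈ Γ.part b, σ Γ i)
      (y := Γ.quotientShapley) (fun b => Γ.unionSections b = Γ.K) ?_ hproper ha hKa ?_ ?_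
    · rw [hV.sum_sum_part, hPO Γ hV, hV.sum_quotientShapley]
    · exact fun b hb hbK => (hETPU Γ hV a ha b hb (hKa.trans hbK.symm)).symm
    · exact fun b _ hbK => by simp only [quotientShapley, hbK, hKa]
  · exact hproper a ha hKa
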